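/- Let Ω be an invertible class on ℙ^n and let Q⁰ = {Q⁰_d}_{d≥0} be an Ω-Euler data. For d, k ≥ 0 define the class Q_{d,k} = (κ − dℏ)^k · Q⁰_d on N_d, so that its restrictions are Q_{d,k}(λ_i + rℏ) = (λ_i − (d−r)ℏ)^k · Q⁰_d(λ_i + rℏ). Then Q = {Q_{d,k}}_{d≥0,k≥0} is a (0,1,p,Ω)-Euler data extending Q⁰ (i.e. Q_{d,0} = Q⁰_d for all d). -/

import Mathlib

open Polynomial

set_option maxHeartbeats 1000000
set_option synthInstance.maxHeartbeats 400000

noncomputable section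

/-- The ground field `F = ℂ(λ₀,…,λₙ)`, the field of rational functions in the
equivariant weights `λ₀,…,λₙ`. -/
def F (n : ℕ) : Type := FractionRing (MvPolynomial (Fin (n+1)) ℂ)

instance (n : ℕ) : Field (F n) :=
  inferInstanceAs (Field (FractionRing (MvPolynomial (Fin (n+1)) ℂ)))

instance (n : ℕ) : Algebra (MvPolynomial (Fin (n+1)) ℂ) (F n) :=
  inferInstanceAs (Algebra (MvPolynomial (Fin (n+1)) ℂ)
    (FractionRing (MvPolynomial (Fin (n+1)) ℂ)))

/-- The weight `λᵢ` as an element of `F`. -/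
def lam (n : ℕ) (i : Fin (n+1)) : F n :=
  algebraMap (MvPolynomial (Fin (n+1)) ℂ) (F n) (MvPolynomial.X i)

/-- The polynomial ring `F[ℏ]`.  The variable `X` plays the role of `ℏ`. -/
abbrev Fh (n : ℕ) : Type := Polynomial (F n)

/-- The element `λᵢ + rℏ` of `F[ℏ]`. -/
def pt (n : ℕ) (i : Fin (n+1)) (r : ℕ) : Fh n := C (lam n i) + (r : Fh n) * X

/-- The generator `∏_{l=0}^{n} ∏_{m=0}^{d} (κ − λ_l − mℏ)` of the relation ideal
of the localized equivariant cohomology of `N_d`; the outer polynomial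
variable `X` plays the role of `κ`. -/
def genN (n d : ℕ) : Polynomial (Fh n) :=
  ∏ l : Fin (n+1), ∏ m ∈ Finset.range (d+1), (X - C (pt n l m))

/-- Classes on the linear model `N_d`:
`F[ℏ][κ] / (∏_{l=0}^{n} ∏_{m=0}^{d} (κ − λ_l − mℏ))`. -/
abbrev ClassN (n d : ℕ) : Type :=
  Polynomial (Fh n) ⧸ Ideal.span {genN n d}

lemma eval_genN (n d : ℕ) (i : Fin (n+1)) (r : ℕ) (hr : r ≤ d) :
    Polynomial.eval (pt n i r) (genN n d) = 0 := by
  rw [genN, Polynomial.eval_prod]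
  refine Finset.prod_eq_zero (Finset.mem_univ i) ?_
  rw [Polynomial.eval_prod]
  refine Finset.prod_eq_zero (Finset.mem_range.mpr (Nat.lt_succ_of_le hr)) ?_
  simp

/-- Restriction `Q(λᵢ + rℏ) ∈ F[ℏ]` of a class `Q` on `N_d` (for `r ≤ d`):
evaluation of any representative at `κ = λᵢ + rℏ`. -/
def rest {n d : ℕ} (i : Fin (n+1)) (r : ℕ) (hr : r ≤ d) : ClassN n d →+* Fh n :=
  Ideal.Quotient.lift _ (Polynomial.evalRingHom (pt n i r)) (by
    intro a ha
    rw [Ideal.mem_span_singleton] at ha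
    obtain ⟨c, rfl⟩ := ha
    simp [eval_genN n d i r hr])

/-- `Ω`-Euler data, where the invertible class `Ω` on `ℙⁿ` is identified with the family
of its restrictions `Ω(λᵢ) ∈ F` (the weights `λᵢ` being pairwise distinct, a class on
`ℙⁿ` is precisely such a family). -/
def IsEulerData {n : ℕ} (Ω : Fin (n+1) → F n) (Q : (d : ℕ) → ClassN n d) : Prop :=
  (∀ i, rest i 0 le_rfl (Q 0) = C (Ω i)) ∧
  ∀ d r, 0 < r → ∀ hr : r < d, ∀ i : Fin (n+1),
    C (Ω i) * rest i r hr.le (Q d) =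
      rest i r le_rfl (Q r) * rest i 0 (Nat.zero_le _) (Q (d - r))

/-- `(0,1,β,Ω)`-Euler data; the classes `β`, `Ω` on `ℙⁿ` are identified with the
families of their restrictions at the fixed points. -/
def Is01EulerData {n : ℕ} (β Ω : Fin (n+1) → F n) (Q : (d : ℕ) → ℕ → ClassN n d) : Prop :=
  (∀ (k : ℕ) i, rest i 0 le_rfl (Q 0 k) = C (β i ^ k * Ω i)) ∧
  ∀ d, 1 ≤ d → ∀ r, ∀ hr : r ≤ d, ∀ i : Fin (n+1), ∀ k : ℕ,
    C (Ω i) * rest i r hr (Q d k) =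
      rest i r le_rfl (Q r 0) * rest i 0 (Nat.zero_le _) (Q (d - r) k)

end

/-!
The restriction of `κ − dℏ` at `λᵢ + rℏ` is `λᵢ − (d − r)ℏ`, which depends only on `d − r`.
Hence in the Euler condition for `Q_{d,k}` the factor `(λᵢ − (d − r)ℏ)^k` occurs on both sides,
and the condition reduces to the one for `Q⁰`; at `r = 0` and `r = d` that one holds
because `Q⁰_0 = Ω`.
-/

lemma rest_mk {n d : ℕ} (i : Fin (n+1)) (r : ℕ) (hr : r ≤ d) (P : Polynomial (Fh n)) :
    rest i r hr (Ideal.Quotient.mk (Ideal.span {genN n d}) P) = P.eval (pt n i r) := rfl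

lemma rest_kappa_sub_mul_hbar {n d : ℕ} (i : Fin (n+1)) (r : ℕ) (hr : r ≤ d) :
    rest i r hr (Ideal.Quotient.mk (Ideal.span {genN n d}) (X - C ((d : Fh n) * X))) =
      C (lam n i) - ((d - r : ℕ) : Fh n) * X := by
  rw [rest_mk, eval_sub, eval_X, eval_C, pt, Nat.cast_sub hr]
  ring

lemma IsEulerData.mul_rest_of_le {n : ℕ} {Ω : Fin (n+1) → F n} {Q : (d : ℕ) → ClassN n d}
    (hQ : IsEulerData Ω Q) (d r : ℕ) (hr : r ≤ d) (i : Fin (n+1)) :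
    C (Ω i) * rest i r hr (Q d) =
      rest i r le_rfl (Q r) * rest i 0 (Nat.zero_le _) (Q (d - r)) := by
  rcases Nat.eq_zero_or_pos r with rfl | hr_pos
  · rw [hQ.1 i, Nat.sub_zero]
  rcases hr.eq_or_lt with rfl | hrd
  · rw [Nat.sub_self, hQ.1 i, mul_comm]
  · exact hQ.2 d r hr_pos hrd i

noncomputable def extendEulerData {n : ℕ} (Q : (d : ℕ) → ClassN n d) (d k : ℕ) : ClassN n d :=
  Ideal.Quotient.mk (Ideal.span {genN n d}) ((X : Polynomial (Fh n)) - C ((d : Fh n) * X)) ^ k *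
    Q d

lemma extendEulerData_zero {n : ℕ} (Q : (d : ℕ) → ClassN n d) (d : ℕ) :
    extendEulerData Q d 0 = Q d := by
  rw [extendEulerData, pow_zero, one_mul]

lemma rest_extendEulerData {n : ℕ} (Q : (d : ℕ) → ClassN n d) (d k : ℕ) (i : Fin (n+1))
    (r : ℕ) (hr : r ≤ d) :
    rest i r hr (extendEulerData Q d k) =
      (C (lam n i) - ((d - r : ℕ) : Fh n) * X) ^ k * rest i r hr (Q d) := by
  rw [extendEulerData, map_mul, map_pow, rest_kappa_sub_mul_hbar]

lemma IsEulerData.is01EulerData_extendEulerData {n : ℕ} {Ω : Fin (n+1) → F n}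
    {Q : (d : ℕ) → ClassN n d} (hQ : IsEulerData Ω Q) :
    Is01EulerData (lam n) Ω (extendEulerData Q) := by
  refine ⟨fun k i => ?_, fun d _ r hr i k => ?_⟩
  · rw [rest_extendEulerData, hQ.1 i, Nat.sub_self, Nat.cast_zero, zero_mul, sub_zero, ← C_pow,
      ← C_mul]
  · rw [rest_extendEulerData, rest_extendEulerData, rest_extendEulerData, Nat.sub_self,
      Nat.sub_zero, pow_zero, one_mul, mul_left_comm, hQ.mul_rest_of_le d r hr i, mul_left_comm]

theorem extension_to_01_euler_data_general (n : ℕ)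
    (Ω : Fin (n+1) → F n)
    (Q0 : (d : ℕ) → ClassN n d) (hQ0 : IsEulerData Ω Q0)
    (Q : (d : ℕ) → ℕ → ClassN n d)
    (hQdef : ∀ d k, Q d k =
      (Ideal.Quotient.mk (Ideal.span {genN n d})
          ((X : Polynomial (Fh n)) - C ((d : Fh n) * X))) ^ k * Q0 d) :
    (∀ (d k : ℕ) (i : Fin (n+1)) (r : ℕ) (hr : r ≤ d),
      rest i r hr (Q d k) =
        (C (lam n i) - ((d - r : ℕ) : Fh n) * X) ^ k * rest i r hr (Q0 d)) ∧
    Is01EulerData (lam n) Ω Q ∧ (∀ d, Q d 0 = Q0 d) := by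
  obtain rfl : Q = extendEulerData Q0 := funext₂ hQdef
  exact ⟨rest_extendEulerData Q0, hQ0.is01EulerData_extendEulerData, extendEulerData_zero Q0⟩

/-- **Extension Lemma** (Euler-data part): given `Ω`-Euler data `Q⁰`, the classes
`Q_{d,k} = (κ − dℏ)^k·Q⁰_d` on `N_d` — whose restrictions are
`Q_{d,k}(λᵢ+rℏ) = (λᵢ − (d−r)ℏ)^k·Q⁰_d(λᵢ+rℏ)` — form a `(0,1,p,Ω)`-Euler data
extending `Q⁰`. -/
theorem extension_to_01_euler_data (n : ℕ) (hn : 1 ≤ n)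
    (Ω : Fin (n+1) → F n) (hΩ : ∀ i, Ω i ≠ 0)
    (Q0 : (d : ℕ) → ClassN n d) (hQ0 : IsEulerData Ω Q0)
    (Q : (d : ℕ) → ℕ → ClassN n d)
    (hQdef : ∀ d k, Q d k =
      (Ideal.Quotient.mk (Ideal.span {genN n d})
          ((X : Polynomial (Fh n)) - C ((d : Fh n) * X))) ^ k * Q0 d) :
    (∀ (d k : ℕ) (i : Fin (n+1)) (r : ℕ) (hr : r ≤ d),
      rest i r hr (Q d k) =
        (C (lam n i) - ((d - r : ℕ) : Fh n) * X) ^ k * rest i r hr (Q0 d)) ∧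
    Is01EulerData (lam n) Ω Q ∧ (∀ d, Q d 0 = Q0 d) :=
  extension_to_01_euler_data_general n Ω Q0 hQ0 Q hQdef
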